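/- arXiv:1803.04484 — 4 statements merged into one kernel-verified Lean document; each statement's English description precedes it below -/
import Mathlib

section
/- Let s be a SRSWOR of size n from {1,…,N} with 2 ≤ n ≤ N, and let x̄_s = (1/n)∑_{j∈s} x_j. Then the sample variance is unbiased for the population variance: E[ (1/(n−1)) ∑_{j∈s} (x_j − x̄_s)² ] = S²_x. -/
open MeasureTheory ProbabilityTheory Finset
open scoped ENNReal

/-!
Both variances are averages of squared differences over ordered pairs:
`∑ j ∈ t, (x j - x̄_t) ^ 2 = (1 / (2 #t)) ∑ i ∈ t, ∑ j ∈ t, (x i - x j) ^ 2`.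
Summing the sample version over all `n`-subsets of the population, each pair of distinct units
is counted `(N - 2).choose (n - 2)` times, and
`N.choose n * (n * (n - 1)) = N * (N - 1) * (N - 2).choose (n - 2)` turns the average over
samples into the population variance. Under SRSWOR the expectation is exactly this average.
-/

theorem Finset.sum_sum_sq_sub_eq_two_mul_card_mul_sum_sq_sub_mean {ι K : Type*} [Field K]
    [CharZero K] (t : Finset ι) (x : ι → K) :
    ∑ i ∈ t, ∑ j ∈ t, (x i - x j) ^ 2 = 2 * #t * ∑ j ∈ t, (x j - (∑ i ∈ t, x i) / #t) ^ 2 := by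
  rcases t.eq_empty_or_nonempty with rfl | ht
  · simp
  have hcard : (#t : K) ≠ 0 := by exact_mod_cast ht.card_pos.ne'
  simp only [sub_sq, sum_add_distrib, sum_sub_distrib, ← mul_sum, ← sum_mul, sum_const,
    nsmul_eq_mul, mul_assoc]
  field_simp
  ring

theorem Finset.sum_powersetCard_sum_sum_eq_choose_smul {ι M : Type*} [DecidableEq ι]
    [AddCommMonoid M] {n : ℕ} (hn : 2 ≤ n) (u : Finset ι) (g : ι → ι → M)
    (hg : ∀ i, g i i = 0) :
    ∑ t ∈ u.powersetCard n, ∑ i ∈ t, ∑ j ∈ t, g i j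
      = (#u - 2).choose (n - 2) • ∑ i ∈ u, ∑ j ∈ u, g i j := by
  simp only [← sum_product' _ _ g, smul_sum]
  rw [sum_comm' (t' := u ×ˢ u) (s' := fun p => (u.powersetCard n).filter ({p.1, p.2} ⊆ ·))]
  · refine sum_congr rfl fun p hp => ?_
    obtain ⟨i, j⟩ := p
    rw [sum_const]
    rcases eq_or_ne i j with rfl | hij
    · simp [hg]
    · have hpair : #({i, j} : Finset ι) = 2 := card_pair hij
      rw [mem_product] at hp
      rw [card_filter_powersetCard_subset _ _ _ (insert_subset hp.1 (singleton_subset_iff.2 hp.2))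
        (hpair ▸ hn), hpair]
  · intro t p
    simp only [mem_product, mem_powersetCard, mem_filter, insert_subset_iff, singleton_subset_iff]
    constructor
    · rintro ⟨⟨htu, hcard⟩, hi, hj⟩
      exact ⟨⟨⟨htu, hcard⟩, hi, hj⟩, htu hi, htu hj⟩
    · rintro ⟨⟨⟨htu, hcard⟩, hi, hj⟩, -⟩
      exact ⟨⟨htu, hcard⟩, hi, hj⟩

section

variable {Ω β E : Type*} [MeasurableSpace Ω] {μ : Measure Ω} [Fintype β]
  [NormedAddCommGroup E] [NormedSpace ℝ E] [CompleteSpace E] {S : Ω → β}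

theorem MeasureTheory.integral_comp_eq_sum_measureReal_fiber [IsFiniteMeasure μ]
    (hS : ∀ b, MeasurableSet {ω | S ω = b}) (f : β → E) :
    ∫ ω, f (S ω) ∂μ = ∑ b, μ.real {ω | S ω = b} • f b := by
  have hf : (fun ω => f (S ω)) = fun ω => ∑ b, {ω | S ω = b}.indicator (fun _ => f b) ω := by
    funext ω
    rw [sum_eq_single_of_mem (S ω) (mem_univ _) fun b _ hb => ?_]
    · exact (Set.indicator_of_mem rfl _).symm
    · exact Set.indicator_of_notMem (fun h => hb h.symm) _
  rw [hf, integral_finsetSum _ fun b _ => (integrable_const (f b)).indicator (hS b)]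
  exact sum_congr rfl fun b _ => integral_indicator_const (f b) (hS b)

theorem MeasureTheory.measure_fiber_eq_zero_of_uniformOn [IsProbabilityMeasure μ]
    (hS : ∀ b, MeasurableSet {ω | S ω = b}) {A : Finset β} (hA : A.Nonempty)
    (hSA : ∀ b ∈ A, μ {ω | S ω = b} = (#A : ℝ≥0∞)⁻¹) {b : β} (hb : b ∉ A) :
    μ {ω | S ω = b} = 0 := by
  classical
  have htotal : ∑ b, μ {ω | S ω = b} = 1 :=
    (sum_measure_preimage_singleton univ fun b _ => hS b).trans (by simp)
  have hmass : ∑ b ∈ A, μ {ω | S ω = b} = 1 := by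
    rw [sum_congr rfl hSA, sum_const, nsmul_eq_mul]
    exact ENNReal.mul_inv_cancel (by simpa using hA.ne_empty) (ENNReal.natCast_ne_top _)
  rw [← sum_add_sum_compl A, hmass] at htotal
  have hrest : ∑ b ∈ Aᶜ, μ {ω | S ω = b} = 0 :=
    (ENNReal.add_right_inj ENNReal.one_ne_top).1 (by rw [add_zero]; exact htotal)
  exact sum_eq_zero_iff.1 hrest b (mem_compl.2 hb)

theorem MeasureTheory.integral_comp_eq_sum_div_card_of_uniformOn [IsProbabilityMeasure μ]
    (hS : ∀ b, MeasurableSet {ω | S ω = b}) {A : Finset β} (hA : A.Nonempty)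
    (hSA : ∀ b ∈ A, μ {ω | S ω = b} = (#A : ℝ≥0∞)⁻¹) (f : β → ℝ) :
    ∫ ω, f (S ω) ∂μ = (∑ b ∈ A, f b) / #A := by
  rw [integral_comp_eq_sum_measureReal_fiber hS, ← sum_subset (subset_univ A), sum_div]
  · refine sum_congr rfl fun b hb => ?_
    rw [measureReal_def, hSA b hb, ENNReal.toReal_inv, ENNReal.toReal_natCast, smul_eq_mul,
      inv_mul_eq_div]
  · intro b _ hb
    rw [measureReal_def, measure_fiber_eq_zero_of_uniformOn hS hA hSA hb, ENNReal.toReal_zero,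
      zero_smul]

end

theorem Finset.sum_powersetCard_sampleVariance_div_choose {ι K : Type*} [DecidableEq ι]
    [Field K] [CharZero K] (u : Finset ι) (x : ι → K) {n : ℕ} (hn : 2 ≤ n) (hnu : n ≤ #u) :
    (∑ t ∈ u.powersetCard n, (∑ j ∈ t, (x j - (∑ i ∈ t, x i) / n) ^ 2) / (n - 1)) / (#u).choose n
      = (∑ j ∈ u, (x j - (∑ i ∈ u, x i) / #u) ^ 2) / (#u - 1) := by
  have hn0 : (n : K) ≠ 0 := by exact_mod_cast (by omega : n ≠ 0)
  have hn1 : (n : K) - 1 ≠ 0 := sub_ne_zero.2 (by exact_mod_cast (by omega : n ≠ 1))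
  have hu1 : (#u : K) - 1 ≠ 0 := sub_ne_zero.2 (by exact_mod_cast (by omega : #u ≠ 1))
  have hC : ((#u).choose n : K) ≠ 0 := by exact_mod_cast (Nat.choose_pos hnu).ne'
  set G := ∑ i ∈ u, ∑ j ∈ u, (x i - x j) ^ 2
  have hsample : ∑ t ∈ u.powersetCard n, (∑ j ∈ t, (x j - (∑ i ∈ t, x i) / n) ^ 2) / (n - 1)
      = (#u - 2).choose (n - 2) * G / (2 * n * (n - 1)) := calc
    _ = ∑ t ∈ u.powersetCard n, (∑ i ∈ t, ∑ j ∈ t, (x i - x j) ^ 2) / (2 * n * (n - 1)) := by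
      refine sum_congr rfl fun t ht => ?_
      rw [sum_sum_sq_sub_eq_two_mul_card_mul_sum_sq_sub_mean, (mem_powersetCard.1 ht).2,
        mul_div_mul_left _ _ (mul_ne_zero two_ne_zero hn0)]
    _ = (#u - 2).choose (n - 2) * G / (2 * n * (n - 1)) := by
      rw [← sum_div, sum_powersetCard_sum_sum_eq_choose_smul hn _ _ fun i => by simp, nsmul_eq_mul]
  set V := ∑ j ∈ u, (x j - (∑ i ∈ u, x i) / #u) ^ 2
  have hpop : G = 2 * #u * V := sum_sum_sq_sub_eq_two_mul_card_mul_sum_sq_sub_mean u x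
  have hchoose := congrArg (Nat.cast (R := K)) (Nat.choose_mul (n := #u) hn)
  push_cast [Nat.cast_choose_two] at hchoose
  rw [hsample, hpop]
  field_simp
  linear_combination -2 * V * hchoose

theorem srswor_sample_variance_unbiased_general
    {Ω : Type*} [MeasurableSpace Ω] (μ : Measure Ω) [IsProbabilityMeasure μ]
    (N n : ℕ) (hn : 2 ≤ n) (hnN : n ≤ N)
    (x : Fin N → ℝ) (S : Ω → Finset (Fin N))
    (hSmeas : ∀ t : Finset (Fin N), MeasurableSet {ω | S ω = t})
    (hSunif : ∀ t : Finset (Fin N), t.card = n →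
      μ {ω | S ω = t} = (N.choose n : ℝ≥0∞)⁻¹) :
    ∫ ω, (∑ j ∈ S ω, (x j - (∑ i ∈ S ω, x i) / (n : ℝ)) ^ 2) / ((n : ℝ) - 1) ∂μ =
      (∑ j, (x j - (∑ i, x i) / (N : ℝ)) ^ 2) / ((N : ℝ) - 1) := by
  have hcard : #((univ : Finset (Fin N)).powersetCard n) = N.choose n := by simp
  have hnonempty : ((univ : Finset (Fin N)).powersetCard n).Nonempty :=
    powersetCard_nonempty.2 (by simpa using hnN)
  rw [integral_comp_eq_sum_div_card_of_uniformOn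
    (f := fun t => (∑ j ∈ t, (x j - (∑ i ∈ t, x i) / (n : ℝ)) ^ 2) / ((n : ℝ) - 1)) hSmeas
    hnonempty fun t ht => hcard ▸ hSunif t (mem_powersetCard.1 ht).2, hcard]
  simpa using sum_powersetCard_sampleVariance_div_choose univ x hn (by simpa using hnN)

/-- **Unbiasedness of the sample variance under SRSWOR.**
If `S` is a simple random sample without replacement of size `n` (with `2 ≤ n ≤ N`)
from a population of `N ≥ 2` units, then the sample variance
`(1/(n−1)) ∑_{j∈S} (x_j − x̄_S)²` is unbiased for the population variance `S²_x`. -/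
theorem srswor_sample_variance_unbiased
    {Ω : Type*} [MeasurableSpace Ω] (μ : Measure Ω) [IsProbabilityMeasure μ]
    (N n : ℕ) (hN : 2 ≤ N) (hn : 2 ≤ n) (hnN : n ≤ N)
    (x : Fin N → ℝ) (S : Ω → Finset (Fin N))
    (hSmeas : ∀ t : Finset (Fin N), MeasurableSet {ω | S ω = t})
    (hSunif : ∀ t : Finset (Fin N), t.card = n →
      μ {ω | S ω = t} = (N.choose n : ℝ≥0∞)⁻¹) :
    ∫ ω, (∑ j ∈ S ω, (x j - (∑ i ∈ S ω, x i) / (n : ℝ)) ^ 2) / ((n : ℝ) - 1) ∂μ =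
      (∑ j, (x j - (∑ i, x i) / (N : ℝ)) ^ 2) / ((N : ℝ) - 1) :=
  srswor_sample_variance_unbiased_general μ N n hn hnN x S hSmeas hSunif
end

section
/- Let ξ_1,…,ξ_M be square-integrable real random variables with means t_h = E[ξ_h] and variances v_h = Var(ξ_h) that are pairwise uncorrelated (Cov(ξ_h, ξ_{h'}) = 0 for h ≠ h'), and let s be uniformly distributed over the m-element subsets of {1,…,M} (2 ≤ m ≤ M, M ≥ 2), independent of (ξ_1,…,ξ_M). Then the expected sample variance over the sampled indices is E[ (1/(m−1)) ∑_{h∈s} (ξ_h − ξ̄_s)² ] = (1/(M−1)) ∑_{h=1}^M (t_h − t̄)² + (1/M) ∑_{h=1}^M v_h, where ξ̄_s = (1/m) ∑_{h∈s} ξ_h and t̄ = (1/M) ∑_{h=1}^M t_h. -/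
/-!
Conditioning on `S = s`, which is independent of the `ξ_h`, reduces the claim to a fixed `m`-set
`s`, on which uncorrelatedness gives `E[s²_s(ξ)] = s²_s(t) + (1/m) ∑_{h ∈ s} v_h`, where `s²_s` is
the sample variance over `s`. It remains to average over the `m`-subsets `s`. Each point lies in
`C(M-1, m-1)` of them, which turns the mean of the `v_h` over `s` into their mean over all `M`
points. Since `s²_s(x) = ∑_{h, h' ∈ s} (x_h - x_{h'})² / (2m(m-1))` and each pair of distinct
points lies in `C(M-2, m-2)` of the subsets, the average of `s²_s(t)` is the population variance.
-/

open MeasureTheory ProbabilityTheory Finset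
open scoped ENNReal

instance finsetMeasurableSpace (α : Type*) : MeasurableSpace (Finset α) := ⊤

noncomputable def cov {Ω : Type*} [MeasurableSpace Ω] (μ : Measure Ω)
    (X Y : Ω → ℝ) : ℝ :=
  ∫ ω, (X ω - ∫ ω', X ω' ∂μ) * (Y ω - ∫ ω', Y ω' ∂μ) ∂μ

lemma Nat.cast_choose_mul_eq_mul_choose_pred {R : Type*} [Semiring R] (n : ℕ) {m : ℕ}
    (hm : 1 ≤ m) : (n.choose m : R) * m = n * (n - 1).choose (m - 1) := by
  simpa using congr_arg (Nat.cast : ℕ → R) (Nat.choose_mul (n := n) hm)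

lemma Nat.cast_choose_mul_mul_pred_eq {K : Type*} [Field K] [CharZero K] (n : ℕ) {m : ℕ}
    (hm : 2 ≤ m) : (n.choose m : K) * (m * (m - 1)) = n * (n - 1) * (n - 2).choose (m - 2) := by
  have h := congr_arg (Nat.cast : ℕ → K) (Nat.choose_mul (n := n) hm)
  push_cast [Nat.cast_choose_two] at h
  linear_combination 2 * h

namespace Finset

section DoubleCounting

variable {α β : Type*} [AddCommMonoid β] {s : Finset α} {m : ℕ}

lemma sum_powersetCard_sum (hm : 1 ≤ m) (a : α → β) :
    ∑ t ∈ powersetCard m s, ∑ h ∈ t, a h = (#s - 1).choose (m - 1) • ∑ h ∈ s, a h := by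
  classical
  rw [sum_comm' (t' := s) (s' := fun h ↦ {t ∈ powersetCard m s | {h} ⊆ t})
    (fun t h ↦ by simp only [mem_filter, mem_powersetCard, singleton_subset_iff]; grind),
    smul_sum]
  refine sum_congr rfl fun h hh ↦ ?_
  rw [sum_const, card_filter_powersetCard_subset _ _ _ (by simpa) (by simpa), card_singleton]

lemma sum_powersetCard_sum_product (hm : 2 ≤ m) (f : α × α → β) (hf : ∀ h, f (h, h) = 0) :
    ∑ t ∈ powersetCard m s, ∑ p ∈ t ×ˢ t, f p
      = (#s - 2).choose (m - 2) • ∑ p ∈ s ×ˢ s, f p := by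
  classical
  rw [sum_comm' (t' := s ×ˢ s) (s' := fun p ↦ {t ∈ powersetCard m s | {p.1, p.2} ⊆ t})
    (fun t p ↦ by simp only [mem_filter, mem_powersetCard, mem_product, insert_subset_iff,
      singleton_subset_iff]; grind),
    smul_sum]
  refine sum_congr rfl fun ⟨h, h'⟩ hp ↦ ?_
  obtain rfl | hne := eq_or_ne h h'
  · simp [hf]
  rw [mem_product] at hp
  rw [sum_const, card_filter_powersetCard_subset _ _ _ (by simp [insert_subset_iff, hp])
    (by rwa [card_pair hne]), card_pair hne]

end DoubleCounting

variable {ι : Type*}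

lemma sum_sub_mean_sq (t : Finset ι) (x : ι → ℝ) :
    ∑ h ∈ t, (x h - (∑ h' ∈ t, x h') / #t) ^ 2
      = ∑ h ∈ t, x h ^ 2 - (∑ h ∈ t, x h) ^ 2 / #t := by
  obtain rfl | ht := t.eq_empty_or_nonempty
  · simp
  have hc : (#t : ℝ) ≠ 0 := by simpa using ht.ne_empty
  simp only [sub_sq, sum_add_distrib, sum_sub_distrib, ← sum_mul, ← mul_sum, sum_const,
    nsmul_eq_mul]
  field_simp
  ring

lemma sum_product_sub_sq (t : Finset ι) (x : ι → ℝ) :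
    ∑ p ∈ t ×ˢ t, (x p.1 - x p.2) ^ 2
      = 2 * #t * ∑ h ∈ t, (x h - (∑ h' ∈ t, x h') / #t) ^ 2 := by
  rw [sum_sub_mean_sq, sum_product]
  obtain rfl | ht := t.eq_empty_or_nonempty
  · simp
  have hc : (#t : ℝ) ≠ 0 := by simpa using ht.ne_empty
  simp only [sub_sq, sum_add_distrib, sum_sub_distrib, ← sum_mul, ← mul_sum, sum_const,
    nsmul_eq_mul]
  field_simp
  ring

end Finset

noncomputable def sampleVariance {ι : Type*} (t : Finset ι) (x : ι → ℝ) : ℝ :=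
  (∑ h ∈ t, (x h - (∑ h' ∈ t, x h') / #t) ^ 2) / (#t - 1)

section SampleVariance

variable {ι : Type*}

lemma sampleVariance_eq_sum_product (t : Finset ι) (x : ι → ℝ) :
    sampleVariance t x = (∑ p ∈ t ×ˢ t, (x p.1 - x p.2) ^ 2) / (2 * #t * (#t - 1)) := by
  rw [sampleVariance, sum_product_sub_sq]
  obtain rfl | ht := t.eq_empty_or_nonempty
  · simp
  have hc : (#t : ℝ) ≠ 0 := by simpa using ht.ne_empty
  rw [mul_div_mul_left _ _ (by positivity)]

variable {m : ℕ}

lemma sum_powersetCard_sampleVariance (s : Finset ι) (hm : 2 ≤ m) (x : ι → ℝ) :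
    ∑ t ∈ powersetCard m s, sampleVariance t x = (#s).choose m * sampleVariance s x := by
  obtain hsm | hms := lt_or_ge #s m
  · simp [powersetCard_eq_empty.mpr hsm, Nat.choose_eq_zero_of_lt hsm]
  have hsum : ∑ t ∈ powersetCard m s, sampleVariance t x
      = (∑ t ∈ powersetCard m s, ∑ p ∈ t ×ˢ t, (x p.1 - x p.2) ^ 2) / (2 * m * (m - 1)) := by
    rw [sum_div]
    refine sum_congr rfl fun t ht ↦ ?_
    rw [sampleVariance_eq_sum_product, (mem_powersetCard.mp ht).2]
  have hm' : (2 : ℝ) ≤ m := by exact_mod_cast hm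
  have hs' : (2 : ℝ) ≤ #s := by exact_mod_cast hm.trans hms
  have hm1 : (m : ℝ) - 1 ≠ 0 := by linarith
  have hs1 : (#s : ℝ) - 1 ≠ 0 := by linarith
  rw [hsum, sum_powersetCard_sum_product hm _ (by simp), nsmul_eq_mul,
    sampleVariance_eq_sum_product]
  field_simp
  linear_combination (-∑ p ∈ s ×ˢ s, (x p.1 - x p.2) ^ 2) *
    Nat.cast_choose_mul_mul_pred_eq (K := ℝ) #s hm

lemma sum_powersetCard_sum_div (s : Finset ι) (hm : 1 ≤ m) (v : ι → ℝ) :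
    ∑ t ∈ powersetCard m s, (∑ h ∈ t, v h) / m = (#s).choose m * ((∑ h ∈ s, v h) / #s) := by
  obtain hsm | hms := lt_or_ge #s m
  · simp [powersetCard_eq_empty.mpr hsm, Nat.choose_eq_zero_of_lt hsm]
  have hs' : (#s : ℝ) ≠ 0 := by exact_mod_cast (by omega : #s ≠ 0)
  have hm' : (m : ℝ) ≠ 0 := by exact_mod_cast (by omega : m ≠ 0)
  rw [← sum_div, sum_powersetCard_sum hm, nsmul_eq_mul]
  field_simp
  linear_combination (-∑ h ∈ s, v h) * Nat.cast_choose_mul_eq_mul_choose_pred (R := ℝ) #s hm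

end SampleVariance

section Moments

variable {Ω ι : Type*} [MeasurableSpace Ω] {μ : Measure Ω} {ξ : ι → Ω → ℝ} {t : Finset ι}

lemma integrable_sum_sub_div_sq (hξ : ∀ h ∈ t, MemLp (ξ h) 2 μ) (c : ℝ) :
    Integrable (fun ω ↦ ∑ h ∈ t, (ξ h ω - (∑ h' ∈ t, ξ h' ω) / c) ^ 2) μ :=
  integrable_finsetSum t fun h hh ↦
    ((hξ h hh).sub (by simpa only [div_eq_mul_inv] using
      (memLp_finsetSum t hξ).mul_const c⁻¹)).integrable_sq

variable [IsProbabilityMeasure μ]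

lemma integral_sum_sq_of_covariance_eq_zero (hξ : ∀ h ∈ t, MemLp (ξ h) 2 μ)
    (huncorr : ∀ h ∈ t, ∀ h' ∈ t, h ≠ h' → cov[ξ h, ξ h'; μ] = 0) :
    ∫ ω, (∑ h ∈ t, ξ h ω) ^ 2 ∂μ = (∑ h ∈ t, ∫ ω, ξ h ω ∂μ) ^ 2 + ∑ h ∈ t, Var[ξ h; μ] := by
  have hvar := variance_eq_sub (memLp_finsetSum t hξ)
  rw [variance_fun_sum' hξ, integral_finsetSum t fun h hh ↦ (hξ h hh).integrable one_le_two]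
    at hvar
  have hdiag : ∀ h ∈ t, ∑ h' ∈ t, cov[ξ h, ξ h'; μ] = Var[ξ h; μ] := fun h hh ↦ by
    rw [sum_eq_single_of_mem h hh fun h' hh' hne ↦ huncorr h hh h' hh' hne.symm,
      covariance_self (hξ h hh).aemeasurable]
  rw [sum_congr rfl hdiag] at hvar
  simp only [Pi.pow_apply] at hvar
  linarith

lemma integral_sampleVariance (ht : #t ≠ 1) (hξ : ∀ h ∈ t, MemLp (ξ h) 2 μ)
    (huncorr : ∀ h ∈ t, ∀ h' ∈ t, h ≠ h' → cov[ξ h, ξ h'; μ] = 0) :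
    ∫ ω, sampleVariance t (ξ · ω) ∂μ
      = sampleVariance t (fun h ↦ ∫ ω, ξ h ω ∂μ) + (∑ h ∈ t, Var[ξ h; μ]) / #t := by
  have hsq : ∀ h ∈ t, ∫ ω, ξ h ω ^ 2 ∂μ = Var[ξ h; μ] + (∫ ω, ξ h ω ∂μ) ^ 2 := fun h hh ↦ by
    rw [variance_eq_sub (hξ h hh)]
    simp
  simp only [sampleVariance, sum_sub_mean_sq]
  rw [integral_div, integral_sub (integrable_finsetSum t fun h hh ↦ (hξ h hh).integrable_sq)
      ((memLp_finsetSum t hξ).integrable_sq.div_const _), integral_div,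
    integral_finsetSum t fun h hh ↦ (hξ h hh).integrable_sq, sum_congr rfl hsq,
    integral_sum_sq_of_covariance_eq_zero hξ huncorr, sum_add_distrib]
  obtain ht0 | ht2 : #t = 0 ∨ 2 ≤ #t := by omega
  · simp [card_eq_zero.mp ht0]
  have h1 : (#t : ℝ) - 1 ≠ 0 := by
    have : (2 : ℝ) ≤ #t := by exact_mod_cast ht2
    linarith
  have h0 : (#t : ℝ) ≠ 0 := by positivity
  field_simp
  ring

end Moments

section Conditioning

variable {Ω α β : Type*} [MeasurableSpace Ω] {μ : Measure Ω} [MeasurableSpace α]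
  [MeasurableSpace β] {S : Ω → α} {X : Ω → β}

lemma ProbabilityTheory.IndepFun.integral_eq_sum_mul_integral [Fintype α]
    [MeasurableSingletonClass α] (hSX : IndepFun S X μ) (hS : Measurable S) {g : α → β → ℝ}
    (hg : ∀ a, Measurable (g a))
    (hint : ∀ a, Integrable (fun ω ↦ g a (X ω)) μ) :
    ∫ ω, g (S ω) (X ω) ∂μ = ∑ a, μ.real (S ⁻¹' {a}) * ∫ ω, g a (X ω) ∂μ := by
  classical
  have hsplit : ∀ ω, g (S ω) (X ω) = ∑ a, (S ⁻¹' {a}).indicator 1 ω * g a (X ω) := fun ω ↦ by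
    simp [Set.indicator_apply]
  have hind : ∀ a, AEStronglyMeasurable ((S ⁻¹' {a}).indicator (1 : Ω → ℝ)) μ := fun a ↦
    (stronglyMeasurable_const.indicator (hS (measurableSet_singleton a))).aestronglyMeasurable
  simp_rw [hsplit]
  rw [integral_finsetSum _ fun a _ ↦ (hint a).bdd_mul (c := 1) (hind a)
    (ae_of_all _ fun ω ↦ by by_cases h : S ω = a <;> simp [h])]
  refine sum_congr rfl fun a _ ↦ ?_
  have hSXa : IndepFun ((S ⁻¹' {a}).indicator (1 : Ω → ℝ)) (fun ω ↦ g a (X ω)) μ :=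
    hSX.comp (φ := ({a} : Set α).indicator 1)
      (measurable_one.indicator (measurableSet_singleton a)) (hg a)
  rw [hSXa.integral_fun_mul_eq_mul_integral (hind a) (hint a).aestronglyMeasurable,
    integral_indicator_one (hS (measurableSet_singleton a))]

lemma measure_preimage_singleton_eq_zero_of_sum_eq_one [IsProbabilityMeasure μ]
    [MeasurableSingletonClass α] (hS : Measurable S) {P : Finset α}
    (hP : ∑ a ∈ P, μ (S ⁻¹' {a}) = 1) {a : α} (ha : a ∉ P) : μ (S ⁻¹' {a}) = 0 := by
  classical
  have h := sum_measure_preimage_singleton (μ := μ) (insert a P)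
    fun b _ ↦ hS (measurableSet_singleton b)
  rw [sum_insert ha, hP] at h
  have hle : μ (S ⁻¹' {a}) + 1 ≤ 0 + 1 := by rw [zero_add, h]; exact prob_le_one
  exact nonpos_iff_eq_zero.mp ((ENNReal.add_le_add_iff_right ENNReal.one_ne_top).mp hle)

end Conditioning

theorem expected_sample_variance_uncorrelated_general
    {Ω : Type*} [MeasurableSpace Ω] (μ : Measure Ω) [IsProbabilityMeasure μ]
    (M m : ℕ) (hm : 2 ≤ m) (hmM : m ≤ M)
    (ξ : Fin M → Ω → ℝ) (hξ : ∀ h, MemLp (ξ h) 2 μ)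
    (huncorr : ∀ h h' : Fin M, h ≠ h' → cov μ (ξ h) (ξ h') = 0)
    (S : Ω → Finset (Fin M)) (hSmeas : Measurable S)
    (hS : ∀ t : Finset (Fin M), t.card = m →
      μ {ω | S ω = t} = (M.choose m : ℝ≥0∞)⁻¹)
    (hIndep : IndepFun S (fun ω h => ξ h ω) μ) :
    ∫ ω, (∑ h ∈ S ω, (ξ h ω - (∑ h' ∈ S ω, ξ h' ω) / (m : ℝ)) ^ 2) / ((m : ℝ) - 1) ∂μ =
      (∑ h, ((∫ ω, ξ h ω ∂μ) - (∑ h', ∫ ω, ξ h' ω ∂μ) / (M : ℝ)) ^ 2) / ((M : ℝ) - 1) +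
        (∑ h, variance (ξ h) μ) / (M : ℝ) := by
  set P := powersetCard m (univ : Finset (Fin M))
  set g : Finset (Fin M) → (Fin M → ℝ) → ℝ :=
    fun t x ↦ (∑ h ∈ t, (x h - (∑ h' ∈ t, x h') / (m : ℝ)) ^ 2) / ((m : ℝ) - 1)
  have hchoose : (M.choose m : ℝ) ≠ 0 := by exact_mod_cast (Nat.choose_pos hmM).ne'
  have hS' : ∀ t ∈ P, μ (S ⁻¹' {t}) = (M.choose m : ℝ≥0∞)⁻¹ := fun t ht ↦
    hS t (mem_powersetCard_univ.mp ht)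
  have hmass : ∑ t ∈ P, μ (S ⁻¹' {t}) = 1 := by
    rw [sum_congr rfl hS', sum_const, card_powersetCard, card_univ, Fintype.card_fin,
      nsmul_eq_mul, ENNReal.mul_inv_cancel (by exact_mod_cast hchoose) (by simp)]
  have hnull : ∀ t ∈ univ, t ∉ P → μ.real (S ⁻¹' {t}) * ∫ ω, g t (ξ · ω) ∂μ = 0 := fun t _ ht ↦ by
    simp [measureReal_def, measure_preimage_singleton_eq_zero_of_sum_eq_one hSmeas hmass ht]
  have hcond : ∀ t ∈ P, μ.real (S ⁻¹' {t}) * ∫ ω, g t (ξ · ω) ∂μ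
      = (M.choose m : ℝ)⁻¹ * (sampleVariance t (fun h ↦ ∫ ω, ξ h ω ∂μ)
          + (∑ h ∈ t, Var[ξ h; μ]) / m) := fun t ht ↦ by
    have hcard := (mem_powersetCard.mp ht).2
    have hg : g t = sampleVariance t := funext fun x ↦ by simp only [g, sampleVariance, hcard]
    rw [measureReal_def, hS' t ht, ENNReal.toReal_inv, ENNReal.toReal_natCast, hg, ← hcard]
    exact congrArg _ (integral_sampleVariance (by omega) (fun h _ ↦ hξ h)
      fun h _ h' _ hne ↦ huncorr h h' hne)
  calc ∫ ω, g (S ω) (ξ · ω) ∂μ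
      = ∑ t, μ.real (S ⁻¹' {t}) * ∫ ω, g t (ξ · ω) ∂μ :=
        hIndep.integral_eq_sum_mul_integral hSmeas (fun t ↦ by fun_prop)
          fun t ↦ (integrable_sum_sub_div_sq (fun h _ ↦ hξ h) _).div_const _
    _ = (M.choose m : ℝ)⁻¹ * ∑ t ∈ P, (sampleVariance t (fun h ↦ ∫ ω, ξ h ω ∂μ)
          + (∑ h ∈ t, Var[ξ h; μ]) / m) := by
        rw [← sum_subset (subset_univ P) hnull, sum_congr rfl hcond, mul_sum]
    _ = _ := by
        rw [sum_add_distrib, sum_powersetCard_sampleVariance _ hm,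
          sum_powersetCard_sum_div _ (by omega), ← mul_add, card_univ, Fintype.card_fin,
          inv_mul_cancel_left₀ hchoose, sampleVariance, card_univ, Fintype.card_fin]

/-- **Expected sample variance of pairwise uncorrelated noisy values over a uniformly
random subset.**
If `ξ₁,…,ξ_M` are square-integrable, pairwise uncorrelated random variables with means
`t_h` and variances `v_h`, and `S` is uniformly distributed over the `m`-element subsets
of `{1,…,M}` (with `2 ≤ m ≤ M`), independent of the `ξ`'s, then
`E[(1/(m−1)) ∑_{h∈S} (ξ_h − ξ̄_S)²] = (1/(M−1)) ∑_h (t_h − t̄)² + (1/M) ∑_h v_h`. -/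
theorem expected_sample_variance_uncorrelated
    {Ω : Type*} [MeasurableSpace Ω] (μ : Measure Ω) [IsProbabilityMeasure μ]
    (M m : ℕ) (hM : 2 ≤ M) (hm : 2 ≤ m) (hmM : m ≤ M)
    (ξ : Fin M → Ω → ℝ) (hξ : ∀ h, MemLp (ξ h) 2 μ)
    (huncorr : ∀ h h' : Fin M, h ≠ h' → cov μ (ξ h) (ξ h') = 0)
    (S : Ω → Finset (Fin M)) (hSmeas : Measurable S)
    (hS : ∀ t : Finset (Fin M), t.card = m →
      μ {ω | S ω = t} = (M.choose m : ℝ≥0∞)⁻¹)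
    (hIndep : IndepFun S (fun ω h => ξ h ω) μ) :
    ∫ ω, (∑ h ∈ S ω, (ξ h ω - (∑ h' ∈ S ω, ξ h' ω) / (m : ℝ)) ^ 2) / ((m : ℝ) - 1) ∂μ =
      (∑ h, ((∫ ω, ξ h ω ∂μ) - (∑ h', ∫ ω, ξ h' ω ∂μ) / (M : ℝ)) ^ 2) / ((M : ℝ) - 1) +
        (∑ h, variance (ξ h) μ) / (M : ℝ) :=
  expected_sample_variance_uncorrelated_general μ M m hm hmM ξ hξ huncorr S hSmeas hS hIndep
end

section
/- Let x_1,…,x_N be real values on a population of N ≥ 2 units, let s₁ be uniformly distributed over the n-element subsets of {1,…,N} with 2 ≤ n ≤ N, and let T₁, T₂ be square-integrable real random variables with E[T₁ | s₁] = ∑_{j∈s₁} x_j and E[T₂ | s₁] = ∑_{j∈s₁} x_j². Then the plug-in variance estimator Ŝ² = (1/(n−1)) (T₂ − T₁²/n) satisfies E[Ŝ²] = S²_x − (1/(n(n−1))) E[Var(T₁ | s₁)]. -/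
open MeasureTheory ProbabilityTheory Finset
open scoped ENNReal

/-- The conditional variance of `X` given the sub-σ-algebra `m`. -/
noncomputable def condVarFn {Ω : Type*} {m0 : MeasurableSpace Ω} (m : MeasurableSpace Ω)
    (μ : @MeasureTheory.Measure Ω m0) (X : Ω → ℝ) : Ω → ℝ :=
  μ[fun ω => (X ω - (μ[X|m]) ω) ^ 2 | m]

/-!
Conditioning on `S` splits `E[T₁²]` as `E[Var(T₁ | S)] + E[(∑_{j ∈ S} x_j)²]`, and
`E[T₂] = E[∑_{j ∈ S} x_j²]`, so the identity reduces to the first two moments of sample sums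
under simple random sampling. These come from counting: a unit lies in `C(N-1, n-1)` of the
`C(N, n)` samples and a pair of distinct units in `C(N-2, n-2)`, which gives
`E[∑_{j ∈ S} x_j] = (n/N) ∑ x_j` and
`E[(∑_{j ∈ S} x_j)²] = (n(n-1) (∑ x_j)² + n(N-n) ∑ x_j²) / (N(N-1))`.
-/

namespace Finset

variable {α : Type*} [Fintype α] [DecidableEq α]

lemma card_powersetCard_univ_filter_mem {k : ℕ} (hk : 1 ≤ k) (i : α) :
    #{t ∈ powersetCard k (univ : Finset α) | i ∈ t} = (Fintype.card α - 1).choose (k - 1) := by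
  simpa using card_filter_powersetCard_subset {i} univ k (subset_univ _) (by simpa using hk)

/-- Pascal's rule splits the diagonal count `C(N-1, k-1)` as `C(N-2, k-2) + C(N-2, k-1)`, so that
summing `x i * x j` against this count separates `(∑ x)²` from `∑ x²`. -/
lemma card_powersetCard_univ_filter_pair_subset {k : ℕ} (hk : 2 ≤ k)
    (hα : 2 ≤ Fintype.card α) (i j : α) :
    #{t ∈ powersetCard k (univ : Finset α) | {i, j} ⊆ t} =
      (Fintype.card α - 2).choose (k - 2) +
        if i = j then (Fintype.card α - 2).choose (k - 1) else 0 := by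
  by_cases hij : i = j
  · subst hij
    simp only [pair_eq_singleton, if_pos, singleton_subset_iff]
    rw [card_powersetCard_univ_filter_mem (by omega),
      Nat.choose_eq_choose_pred_add (by omega) (by omega), Nat.sub_sub, Nat.sub_sub]
  · rw [if_neg hij, add_zero, card_filter_powersetCard_subset _ _ _ (subset_univ _)
      (by rw [card_pair hij]; exact hk), card_pair hij, card_univ]

lemma sum_powersetCard_univ_sum {M : Type*} [AddCommMonoid M] {k : ℕ} (hk : 1 ≤ k) (f : α → M) :
    ∑ t ∈ powersetCard k (univ : Finset α), ∑ j ∈ t, f j =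
      (Fintype.card α - 1).choose (k - 1) • ∑ j, f j := by
  calc ∑ t ∈ powersetCard k (univ : Finset α), ∑ j ∈ t, f j
      = ∑ j, ∑ t ∈ powersetCard k (univ : Finset α), if j ∈ t then f j else 0 := by
        rw [sum_comm]; simp only [sum_ite_mem, univ_inter]
    _ = ∑ j, #{t ∈ powersetCard k (univ : Finset α) | j ∈ t} • f j := by
        simp only [← sum_filter, sum_const]
    _ = _ := by simp only [card_powersetCard_univ_filter_mem hk, smul_sum]

lemma sum_powersetCard_univ_sq_sum {R : Type*} [CommSemiring R] {k : ℕ} (hk : 2 ≤ k)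
    (hα : 2 ≤ Fintype.card α) (x : α → R) :
    ∑ t ∈ powersetCard k (univ : Finset α), (∑ j ∈ t, x j) ^ 2 =
      (Fintype.card α - 2).choose (k - 2) * (∑ j, x j) ^ 2 +
        (Fintype.card α - 2).choose (k - 1) * ∑ j, x j ^ 2 := by
  have hsq : ∀ t : Finset α, (∑ j ∈ t, x j) ^ 2 =
      ∑ i, ∑ j, if {i, j} ⊆ t then x i * x j else 0 := by
    intro t
    rw [← univ_inter t, ← sum_ite_mem, sq, sum_mul_sum]
    simp only [univ_inter, insert_subset_iff, singleton_subset_iff, ite_mul, mul_ite,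
      zero_mul, mul_zero, ← ite_and, and_comm]
  calc ∑ t ∈ powersetCard k (univ : Finset α), (∑ j ∈ t, x j) ^ 2
      = ∑ i, ∑ j, #{t ∈ powersetCard k (univ : Finset α) | {i, j} ⊆ t} • (x i * x j) := by
        simp only [hsq]
        rw [sum_comm]
        refine sum_congr rfl fun i _ => ?_
        rw [sum_comm]
        simp only [← sum_filter, sum_const]
    _ = _ := by
        simp only [card_powersetCard_univ_filter_pair_subset hk hα, nsmul_eq_mul, Nat.cast_add,
          Nat.cast_ite, Nat.cast_zero, add_mul, ite_mul, zero_mul, sum_add_distrib, sum_ite_eq,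
          mem_univ, if_true, ← mul_sum, sq, sum_mul_sum]

lemma sum_sub_sum_div_card_sq {ι K : Type*} [Field K] [CharZero K] (s : Finset ι)
    (x : ι → K) :
    ∑ i ∈ s, (x i - (∑ j ∈ s, x j) / #s) ^ 2 = ∑ i ∈ s, x i ^ 2 - (∑ i ∈ s, x i) ^ 2 / #s := by
  rcases s.eq_empty_or_nonempty with rfl | hs
  · simp
  have hcard : (#s : K) ≠ 0 := by simpa using hs.ne_empty
  simp only [sub_sq, sum_add_distrib, sum_sub_distrib, ← sum_mul, ← mul_sum, sum_const,
    nsmul_eq_mul]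
  field_simp
  ring

end Finset

lemma Nat.mul_choose_sub_one_sub_one {N k : ℕ} (hk : 1 ≤ k) :
    N * (N - 1).choose (k - 1) = N.choose k * k := by
  obtain ⟨k, rfl⟩ := Nat.exists_eq_add_of_le' hk
  cases N with
  | zero => simp
  | succ N => simpa using Nat.add_one_mul_choose_eq N k

lemma condVarFn_eq_condVar {Ω : Type*} {m m₀ : MeasurableSpace Ω} (μ : Measure[m₀] Ω)
    (X : Ω → ℝ) : condVarFn m μ X = Var[X; μ | m] :=
  rfl

lemma integral_sq_eq_integral_condVar_add_integral_condExp_sq {Ω : Type*}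
    {m m₀ : MeasurableSpace Ω} {μ : Measure[m₀] Ω} [IsFiniteMeasure μ] (hm : m ≤ m₀)
    {X : Ω → ℝ} (hX : MemLp X 2 μ) :
    ∫ ω, X ω ^ 2 ∂μ = ∫ ω, Var[X; μ | m] ω ∂μ + ∫ ω, (μ[X | m]) ω ^ 2 ∂μ := by
  rw [integral_congr_ae (condVar_ae_eq_condExp_sq_sub_sq_condExp hm hX),
    integral_sub' (g := μ[X | m] ^ 2) integrable_condExp (hX.condExp one_le_two).integrable_sq,
    integral_condExp hm]
  simp

lemma integral_eq_sum_div_card_of_measure_singleton {β : Type*} [MeasurableSpace β]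
    [MeasurableSingletonClass β] (ν : Measure β) [IsProbabilityMeasure ν] {P : Finset β}
    (hP : P.Nonempty) (hν : ∀ t ∈ P, ν {t} = (#P : ℝ≥0∞)⁻¹) (g : β → ℝ) :
    ∫ t, g t ∂ν = (∑ t ∈ P, g t) / #P := by
  have hνP : ν P = 1 := by
    rw [← sum_measure_singleton, sum_congr rfl hν, sum_const, nsmul_eq_mul,
      ENNReal.mul_inv_cancel (by simpa using hP.ne_empty) (ENNReal.natCast_ne_top _)]
  have hae : ∀ᵐ t ∂ν, t ∈ (P : Set β) :=
    (ae_mem_iff_measure_eq P.measurableSet.nullMeasurableSet).2 (by simp [hνP])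
  rw [← Measure.restrict_eq_self_of_ae_mem hae, setIntegral_finset P
    IntegrableOn.finset, sum_div]
  refine sum_congr rfl fun t ht => ?_
  rw [measureReal_def, hν t ht, smul_eq_mul, ENNReal.toReal_inv, ENNReal.toReal_natCast,
    inv_mul_eq_div]

instance finsetDiscreteMeasurableSpace (α : Type*) : DiscreteMeasurableSpace (Finset α) :=
  ⟨fun _ => MeasurableSpace.measurableSet_top⟩

section SimpleRandomSample

variable {Ω α : Type*} [MeasurableSpace Ω] {μ : Measure Ω} [IsProbabilityMeasure μ]
  [Fintype α] {S : Ω → Finset α} {n : ℕ}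

lemma integral_comp_of_uniform_powersetCard (hSmeas : Measurable S) (hn : n ≤ Fintype.card α)
    (hS : ∀ t : Finset α, #t = n → μ {ω | S ω = t} = ((Fintype.card α).choose n : ℝ≥0∞)⁻¹)
    (g : Finset α → ℝ) :
    ∫ ω, g (S ω) ∂μ = (∑ t ∈ powersetCard n univ, g t) / (Fintype.card α).choose n := by
  have := Measure.isProbabilityMeasure_map (μ := μ) hSmeas.aemeasurable
  rw [← integral_map hSmeas.aemeasurable Measurable.of_discrete.aestronglyMeasurable,
    integral_eq_sum_div_card_of_measure_singleton _ (powersetCard_nonempty.2 (by simpa))]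
  · simp
  · intro t ht
    rw [Measure.map_apply hSmeas (measurableSet_singleton t), card_powersetCard, card_univ]
    exact hS t (mem_powersetCard.1 ht).2

lemma integral_sum_mem_of_uniform_powersetCard (hSmeas : Measurable S) (hn : 1 ≤ n)
    (hnα : n ≤ Fintype.card α)
    (hS : ∀ t : Finset α, #t = n → μ {ω | S ω = t} = ((Fintype.card α).choose n : ℝ≥0∞)⁻¹)
    (f : α → ℝ) :
    ∫ ω, ∑ j ∈ S ω, f j ∂μ = n / Fintype.card α * ∑ j, f j := by
  classical
  rw [integral_comp_of_uniform_powersetCard hSmeas hnα hS (fun t => ∑ j ∈ t, f j),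
    sum_powersetCard_univ_sum hn, nsmul_eq_mul]
  set N := Fintype.card α
  have hC : (N.choose n : ℝ) ≠ 0 := by exact_mod_cast (Nat.choose_pos hnα).ne'
  have hN : (N : ℝ) ≠ 0 := by norm_cast; omega
  have hc₁ : (N : ℝ) * (N - 1).choose (n - 1) = N.choose n * n := by
    exact_mod_cast Nat.mul_choose_sub_one_sub_one hn
  field_simp
  linear_combination (∑ j, f j) * hc₁

lemma integral_sq_sum_mem_of_uniform_powersetCard (hSmeas : Measurable S) (hn : 2 ≤ n)
    (hnα : n ≤ Fintype.card α)
    (hS : ∀ t : Finset α, #t = n → μ {ω | S ω = t} = ((Fintype.card α).choose n : ℝ≥0∞)⁻¹)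
    (x : α → ℝ) :
    ∫ ω, (∑ j ∈ S ω, x j) ^ 2 ∂μ =
      (n * (n - 1) * (∑ j, x j) ^ 2 + n * (Fintype.card α - n) * ∑ j, x j ^ 2) /
        (Fintype.card α * (Fintype.card α - 1)) := by
  classical
  rw [integral_comp_of_uniform_powersetCard hSmeas hnα hS (fun t => (∑ j ∈ t, x j) ^ 2),
    sum_powersetCard_univ_sq_sum hn (by omega)]
  set N := Fintype.card α
  have hC : (N.choose n : ℝ) ≠ 0 := by exact_mod_cast (Nat.choose_pos hnα).ne'
  have hN : (N : ℝ) ≠ 0 := by norm_cast; omega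
  have hN₁ : (N : ℝ) - 1 ≠ 0 := by
    rw [sub_ne_zero]; norm_cast; omega
  have hc₁ : (N : ℝ) * (N - 1).choose (n - 1) = N.choose n * n := by
    exact_mod_cast Nat.mul_choose_sub_one_sub_one (by omega : 1 ≤ n)
  have hc₂ : ((N : ℝ) - 1) * (N - 2).choose (n - 2) = (N - 1).choose (n - 1) * (n - 1) := by
    have h := Nat.mul_choose_sub_one_sub_one (N := N - 1) (k := n - 1) (by omega)
    rw [Nat.sub_sub, Nat.sub_sub] at h
    rw [← Nat.cast_one (R := ℝ), ← Nat.cast_sub (by omega), ← Nat.cast_sub (by omega)]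
    exact_mod_cast h
  have hpascal :
      ((N - 1).choose (n - 1) : ℝ) = (N - 2).choose (n - 2) + (N - 2).choose (n - 1) := by
    have h := Nat.choose_eq_choose_pred_add (n := N - 1) (k := n - 1) (by omega) (by omega)
    rw [Nat.sub_sub, Nat.sub_sub] at h
    exact_mod_cast h
  field_simp
  linear_combination (∑ j, x j) ^ 2 * (N * hc₂ + (n - 1) * hc₁) +
    (∑ j, x j ^ 2) * ((N - n) * hc₁ - N * hc₂ - N * (N - 1) * hpascal)

end SimpleRandomSample

theorem plug_in_variance_estimator_expectation_general
    {Ω : Type*} [MeasurableSpace Ω] (μ : Measure Ω) [IsProbabilityMeasure μ]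
    (N n : ℕ) (hn : 2 ≤ n) (hnN : n ≤ N)
    (x : Fin N → ℝ)
    (S : Ω → Finset (Fin N)) (hSmeas : Measurable S)
    (hS : ∀ t : Finset (Fin N), t.card = n →
      μ {ω | S ω = t} = (N.choose n : ℝ≥0∞)⁻¹)
    (T₁ T₂ : Ω → ℝ) (hT₁ : MemLp T₁ 2 μ) (hT₂ : MemLp T₂ 2 μ)
    (hT₁unb : μ[T₁ | MeasurableSpace.comap S ⊤] =ᵐ[μ] fun ω => ∑ j ∈ S ω, x j)
    (hT₂unb : μ[T₂ | MeasurableSpace.comap S ⊤] =ᵐ[μ] fun ω => ∑ j ∈ S ω, x j ^ 2) :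
    ∫ ω, (T₂ ω - T₁ ω ^ 2 / (n : ℝ)) / ((n : ℝ) - 1) ∂μ =
      (∑ j, (x j - (∑ i, x i) / (N : ℝ)) ^ 2) / ((N : ℝ) - 1) -
        (1 / ((n : ℝ) * ((n : ℝ) - 1))) *
          ∫ ω, condVarFn (MeasurableSpace.comap S ⊤) μ T₁ ω ∂μ := by
  have hm : MeasurableSpace.comap S ⊤ ≤ ‹MeasurableSpace Ω› := hSmeas.comap_le
  have hnN' : n ≤ Fintype.card (Fin N) := by simpa using hnN
  have hS' : ∀ t : Finset (Fin N), #t = n →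
      μ {ω | S ω = t} = ((Fintype.card (Fin N)).choose n : ℝ≥0∞)⁻¹ := by simpa using hS
  have hET₂ : ∫ ω, T₂ ω ∂μ = n / N * ∑ j, x j ^ 2 := by
    rw [← integral_condExp hm, integral_congr_ae hT₂unb,
      integral_sum_mem_of_uniform_powersetCard hSmeas (by omega) hnN' hS', Fintype.card_fin]
  have hET₁sq : ∫ ω, T₁ ω ^ 2 ∂μ = ∫ ω, condVarFn (MeasurableSpace.comap S ⊤) μ T₁ ω ∂μ +
      (n * (n - 1) * (∑ j, x j) ^ 2 + n * (N - n) * ∑ j, x j ^ 2) / (N * (N - 1)) := by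
    have hsq : (fun ω => (μ[T₁ | MeasurableSpace.comap S ⊤]) ω ^ 2) =ᵐ[μ]
        fun ω => (∑ j ∈ S ω, x j) ^ 2 := hT₁unb.fun_comp (· ^ 2)
    rw [integral_sq_eq_integral_condVar_add_integral_condExp_sq hm hT₁, integral_congr_ae hsq,
      integral_sq_sum_mem_of_uniform_powersetCard hSmeas hn hnN' hS', Fintype.card_fin,
      condVarFn_eq_condVar]
  have hdev := sum_sub_sum_div_card_sq univ x
  rw [card_univ, Fintype.card_fin] at hdev
  have hN : (N : ℝ) ≠ 0 := by norm_cast; omega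
  have hN₁ : (N : ℝ) - 1 ≠ 0 := by rw [sub_ne_zero]; norm_cast; omega
  have hn₁ : (n : ℝ) - 1 ≠ 0 := by rw [sub_ne_zero]; norm_cast; omega
  rw [integral_div, integral_sub (hT₂.integrable one_le_two) (hT₁.integrable_sq.div_const _),
    integral_div, hET₂, hET₁sq, hdev]
  field_simp
  ring

/-- **Bias of the plug-in variance estimator.**
Let `S` be a SRSWOR of size `n` (`2 ≤ n ≤ N`) from a population of `N ≥ 2` units and
let `T₁, T₂` be square-integrable with `E[T₁ | S] = ∑_{j∈S} x_j` and
`E[T₂ | S] = ∑_{j∈S} x_j²`.  Then `Ŝ² = (1/(n−1)) (T₂ − T₁²/n)` satisfies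
`E[Ŝ²] = S²_x − (1/(n(n−1))) E[Var(T₁ | S)]`. -/
theorem plug_in_variance_estimator_expectation
    {Ω : Type*} [MeasurableSpace Ω] (μ : Measure Ω) [IsProbabilityMeasure μ]
    (N n : ℕ) (hN : 2 ≤ N) (hn : 2 ≤ n) (hnN : n ≤ N)
    (x : Fin N → ℝ)
    (S : Ω → Finset (Fin N)) (hSmeas : Measurable S)
    (hS : ∀ t : Finset (Fin N), t.card = n →
      μ {ω | S ω = t} = (N.choose n : ℝ≥0∞)⁻¹)
    (T₁ T₂ : Ω → ℝ) (hT₁ : MemLp T₁ 2 μ) (hT₂ : MemLp T₂ 2 μ)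
    (hT₁unb : μ[T₁ | MeasurableSpace.comap S ⊤] =ᵐ[μ] fun ω => ∑ j ∈ S ω, x j)
    (hT₂unb : μ[T₂ | MeasurableSpace.comap S ⊤] =ᵐ[μ] fun ω => ∑ j ∈ S ω, x j ^ 2) :
    ∫ ω, (T₂ ω - T₁ ω ^ 2 / (n : ℝ)) / ((n : ℝ) - 1) ∂μ =
      (∑ j, (x j - (∑ i, x i) / (N : ℝ)) ^ 2) / ((N : ℝ) - 1) -
        (1 / ((n : ℝ) * ((n : ℝ) - 1))) *
          ∫ ω, condVarFn (MeasurableSpace.comap S ⊤) μ T₁ ω ∂μ :=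
  plug_in_variance_estimator_expectation_general μ N n hn hnN x S hSmeas hS T₁ T₂ hT₁ hT₂ hT₁unb
    hT₂unb
end

section
/- Let x_1,…,x_N and y_1,…,y_N be real values on a population of N ≥ 2 units, let s₁ be uniformly distributed over the n-element subsets of {1,…,N} with 2 ≤ n ≤ N, and let T_x, T_y, T_{xy} be square-integrable real random variables with E[T_x | s₁] = ∑_{j∈s₁} x_j, E[T_y | s₁] = ∑_{j∈s₁} y_j, and E[T_{xy} | s₁] = ∑_{j∈s₁} x_j y_j. Then the plug-in covariance estimator Ŝ_{xy} = (1/(n−1)) (T_{xy} − T_x T_y / n) satisfies E[Ŝ_{xy}] = S_{xy} − (1/(n(n−1))) E[Cov(T_x, T_y | s₁)]. -/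
/-!
Conditioning on the sample, `E[T_x T_y] = E[Cov(T_x, T_y | s₁)] + E[(∑_{s₁} x)(∑_{s₁} y)]`, since
the residual `T_x - E[T_x | s₁]` is orthogonal to every square-integrable `s₁`-measurable variable;
likewise `E[T_{xy}] = E[∑_{s₁} x y]`. Under simple random sampling without replacement a unit lies
in the sample with probability `n / N` and two distinct units with probability
`n (n - 1) / (N (N - 1))`, which makes both sample expectations explicit. What remains is the
algebraic identity `∑ (x - x̄)(y - ȳ) = ∑ x y - (∑ x)(∑ y) / N`.
-/

open MeasureTheory ProbabilityTheory Finset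
open scoped ENNReal

/-- The conditional covariance of `X` and `Y` given the sub-σ-algebra `m`. -/
noncomputable def condCovFn {Ω : Type*} {m0 : MeasurableSpace Ω} (m : MeasurableSpace Ω)
    (μ : @MeasureTheory.Measure Ω m0) (X Y : Ω → ℝ) : Ω → ℝ :=
  μ[fun ω => (X ω - (μ[X|m]) ω) * (Y ω - (μ[Y|m]) ω) | m]

namespace Nat

variable {K : Type*} [Field K] [CharZero K] {m k : ℕ}

theorem cast_choose_pred_div_choose (hk : 1 ≤ k) (hkm : k ≤ m) :
    ((m - 1).choose (k - 1) : K) / m.choose k = k / m := by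
  obtain ⟨k, rfl⟩ := Nat.exists_eq_add_of_le' hk
  obtain ⟨m, rfl⟩ := Nat.exists_eq_add_of_le' (hk.trans hkm)
  have hchoose : ((m + 1).choose (k + 1) : K) ≠ 0 := by
    exact_mod_cast (choose_pos hkm).ne'
  rw [div_eq_div_iff hchoose (cast_ne_zero.2 m.succ_ne_zero), Nat.add_sub_cancel,
    Nat.add_sub_cancel, mul_comm, mul_comm (k + 1 : ℕ).cast]
  exact_mod_cast add_one_mul_choose_eq m k

theorem cast_choose_sub_two_div_choose (hk : 2 ≤ k) (hkm : k ≤ m) :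
    ((m - 2).choose (k - 2) : K) / m.choose k = k * (k - 1) / (m * (m - 1)) := by
  have hpred := cast_choose_pred_div_choose (K := K) (m := m - 1) (k := k - 1) (by omega)
    (by omega)
  rw [Nat.sub_sub, Nat.sub_sub, cast_sub (by omega : 1 ≤ k), cast_sub (by omega : 1 ≤ m),
    cast_one] at hpred
  have hchoose : ((m - 1).choose (k - 1) : K) ≠ 0 := by
    exact_mod_cast (choose_pos (by omega)).ne'
  rw [mul_div_mul_comm, ← cast_choose_pred_div_choose (by omega) hkm, ← hpred, mul_comm,
    div_mul_div_cancel₀ hchoose]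

end Nat

namespace Finset

variable {ι : Type*}

theorem sum_sub_mean_mul_sub_mean {K : Type*} [Field K] (s : Finset ι) (x y : ι → K) :
    ∑ j ∈ s, (x j - (∑ i ∈ s, x i) / #s) * (y j - (∑ i ∈ s, y i) / #s) =
      ∑ j ∈ s, x j * y j - (∑ j ∈ s, x j) * (∑ j ∈ s, y j) / #s := by
  by_cases hcard : (#s : K) = 0
  · simp [hcard]
  simp only [sub_mul, mul_sub, sum_sub_distrib, ← sum_mul, ← mul_sum, sum_const, nsmul_eq_mul]
  field_simp
  ring

variable [DecidableEq ι] {s : Finset ι} {n : ℕ}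

theorem card_filter_powersetCard_pair_subset {j k : ι} (hj : j ∈ s) (hk : k ∈ s) (hn : 2 ≤ n) :
    #{t ∈ s.powersetCard n | {j, k} ⊆ t} =
      if j = k then (#s - 1).choose (n - 1) else (#s - 2).choose (n - 2) := by
  rw [card_filter_powersetCard_subset _ _ _ (insert_subset hj (singleton_subset_iff.2 hk))
    (card_le_two.trans hn)]
  split_ifs with hjk
  · simp [hjk]
  · rw [card_pair hjk]

theorem sum_powersetCard_sum_s15 {M : Type*} [AddCommMonoid M] (hn : 1 ≤ n) (f : ι → M) :
    ∑ t ∈ s.powersetCard n, ∑ j ∈ t, f j = (#s - 1).choose (n - 1) • ∑ j ∈ s, f j := by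
  rw [sum_comm' (t' := s) (s' := fun j => {t ∈ s.powersetCard n | {j} ⊆ t}), smul_sum]
  · refine sum_congr rfl fun j hj => ?_
    rw [sum_const, card_filter_powersetCard_subset _ _ _ (singleton_subset_iff.2 hj)
      (by rwa [card_singleton]), card_singleton]
  · intro t j
    simp only [mem_powersetCard, mem_filter, singleton_subset_iff]
    exact ⟨fun ⟨h, hj⟩ => ⟨⟨h, hj⟩, h.1 hj⟩, fun ⟨h, _⟩ => h⟩

theorem sum_powersetCard_sum_mul_sum {R : Type*} [CommRing R] (hn : 2 ≤ n) (x y : ι → R) :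
    ∑ t ∈ s.powersetCard n, (∑ j ∈ t, x j) * (∑ k ∈ t, y k) =
      (#s - 1).choose (n - 1) • ∑ j ∈ s, x j * y j +
        (#s - 2).choose (n - 2) • ((∑ j ∈ s, x j) * (∑ j ∈ s, y j) - ∑ j ∈ s, x j * y j) := by
  set C₁ := (#s - 1).choose (n - 1)
  set C₂ := (#s - 2).choose (n - 2)
  have hrow : ∀ j ∈ s, ∑ k ∈ s, ∑ _t ∈ s.powersetCard n with {j, k} ⊆ _t, x j * y k =
      C₂ • (x j * ∑ k ∈ s, y k) + (C₁ • (x j * y j) - C₂ • (x j * y j)) := by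
    intro j hj
    calc ∑ k ∈ s, ∑ _t ∈ s.powersetCard n with {j, k} ⊆ _t, x j * y k
        = ∑ k ∈ s, (C₂ • (x j * y k) +
            if j = k then C₁ • (x j * y k) - C₂ • (x j * y k) else 0) := by
          refine sum_congr rfl fun k hk => ?_
          rw [sum_const, card_filter_powersetCard_pair_subset hj hk hn]
          split_ifs <;> abel
      _ = _ := by rw [sum_add_distrib, sum_ite_eq s j, if_pos hj, mul_sum, smul_sum]
  conv_lhs => simp only [sum_mul_sum, ← sum_product']
  rw [sum_comm' (t' := s ×ˢ s) (s' := fun p => {t ∈ s.powersetCard n | {p.1, p.2} ⊆ t}),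
    sum_product, sum_congr rfl hrow]
  · simp only [sum_add_distrib, sum_sub_distrib, ← smul_sum, ← sum_mul, smul_sub]
    abel
  · rintro t ⟨j, k⟩
    simp only [mem_powersetCard, mem_filter, mem_product, insert_subset_iff, singleton_subset_iff]
    exact ⟨fun ⟨h, hj, hk⟩ => ⟨⟨h, hj, hk⟩, h.1 hj, h.1 hk⟩, fun ⟨h, _⟩ => h⟩

end Finset

section ConditionalCovariance

variable {Ω : Type*} {m m0 : MeasurableSpace Ω} {μ : Measure Ω} [IsFiniteMeasure μ]

theorem integral_sub_condExp_mul_eq_zero (hm : m ≤ m0) {X Z : Ω → ℝ} (hX : MemLp X 2 μ)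
    (hZm : StronglyMeasurable[m] Z) (hZ : MemLp Z 2 μ) :
    ∫ ω, (X ω - μ[X|m] ω) * Z ω ∂μ = 0 := by
  have hXZ : Integrable (X * Z) μ := hX.integrable_mul hZ
  have hpull : ∫ ω, X ω * Z ω ∂μ = ∫ ω, μ[X|m] ω * Z ω ∂μ :=
    calc ∫ ω, X ω * Z ω ∂μ = ∫ ω, μ[X * Z|m] ω ∂μ := (integral_condExp hm).symm
      _ = ∫ ω, μ[X|m] ω * Z ω ∂μ := integral_congr_ae
          (condExp_mul_of_stronglyMeasurable_right hZm hXZ (hX.integrable one_le_two))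
  calc ∫ ω, (X ω - μ[X|m] ω) * Z ω ∂μ = ∫ ω, X ω * Z ω ∂μ - ∫ ω, μ[X|m] ω * Z ω ∂μ := by
        simp only [sub_mul]
        exact integral_sub hXZ ((hX.condExp one_le_two).integrable_mul hZ)
    _ = 0 := by rw [hpull, sub_self]

theorem integral_condCovFn (hm : m ≤ m0) {X Y : Ω → ℝ} (hX : MemLp X 2 μ) (hY : MemLp Y 2 μ) :
    ∫ ω, condCovFn m μ X Y ω ∂μ = ∫ ω, X ω * Y ω ∂μ - ∫ ω, μ[X|m] ω * μ[Y|m] ω ∂μ := by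
  have hX' := hX.condExp (m := m) one_le_two
  have hY' := hY.condExp (m := m) one_le_two
  have hXY : Integrable (fun ω => X ω * Y ω) μ := hX.integrable_mul hY
  have hXY' : Integrable (fun ω => μ[X|m] ω * μ[Y|m] ω) μ := hX'.integrable_mul hY'
  have hresX : Integrable (fun ω => (X ω - μ[X|m] ω) * μ[Y|m] ω) μ :=
    (hX.sub hX').integrable_mul hY'
  have hresY : Integrable (fun ω => (Y ω - μ[Y|m] ω) * μ[X|m] ω) μ :=
    (hY.sub hY').integrable_mul hX'
  have hexpand : ∀ ω, (X ω - μ[X|m] ω) * (Y ω - μ[Y|m] ω) = X ω * Y ω - μ[X|m] ω * μ[Y|m] ω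
      - (X ω - μ[X|m] ω) * μ[Y|m] ω - (Y ω - μ[Y|m] ω) * μ[X|m] ω := fun ω => by ring
  rw [condCovFn, integral_condExp hm]
  simp only [hexpand]
  rw [integral_sub, integral_sub, integral_sub,
    integral_sub_condExp_mul_eq_zero hm hX stronglyMeasurable_condExp hY',
    integral_sub_condExp_mul_eq_zero hm hY stronglyMeasurable_condExp hX', sub_zero, sub_zero]
  exacts [hXY, hXY', hXY.sub hXY', hresX, (hXY.sub hXY').sub hresX, hresY]

end ConditionalCovariance

section SimpleRandomSampling

variable {Ω : Type*} [MeasurableSpace Ω] {μ : Measure Ω} [IsProbabilityMeasure μ]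

theorem integral_comp_eq_sum_div_card {α : Type*} [Fintype α] [MeasurableSpace α]
    [DiscreteMeasurableSpace α] {S : Ω → α} (hS : Measurable S) {P : Finset α} (hP : P.Nonempty)
    (hunif : ∀ t ∈ P, μ {ω | S ω = t} = (#P : ℝ≥0∞)⁻¹) (h : α → ℝ) :
    ∫ ω, h (S ω) ∂μ = (∑ t ∈ P, h t) / #P := by
  have : IsProbabilityMeasure (μ.map S) := Measure.isProbabilityMeasure_map hS.aemeasurable
  have hmap : ∀ t, μ.map S {t} = μ {ω | S ω = t} := fun t => Measure.map_apply hS .of_discrete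
  -- `P` already carries total mass `#P • #P⁻¹ = 1`, so the law of `S` vanishes off `P`.
  have hmapP : μ.map S P = 1 := by
    rw [← sum_measure_singleton, sum_congr rfl fun t ht => (hmap t).trans (hunif t ht), sum_const,
      nsmul_eq_mul, ENNReal.mul_inv_cancel (by simpa using hP.ne_empty) (by simp)]
  have hmap_compl : ∀ t ∉ P, μ.map S {t} = 0 := fun t ht =>
    measure_mono_null (Set.singleton_subset_iff.2 ht) ((prob_compl_eq_zero_iff .of_discrete).2 hmapP)
  rw [← integral_map hS.aemeasurable .of_discrete, integral_fintype .of_finite,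
    ← sum_subset (subset_univ P) fun t _ ht => by simp [Measure.real, hmap_compl t ht], sum_div]
  refine sum_congr rfl fun t ht => ?_
  rw [smul_eq_mul, Measure.real, hmap, hunif t ht, ENNReal.toReal_inv]
  simp [div_eq_inv_mul]

variable {ι : Type*} [Fintype ι]

structure IsSRSWOR (μ : Measure Ω) (S : Ω → Finset ι) (n : ℕ) : Prop where
  measurable : Measurable S
  measure_eq : ∀ t : Finset ι, #t = n → μ {ω | S ω = t} = ((Fintype.card ι).choose n : ℝ≥0∞)⁻¹

namespace IsSRSWOR

variable {S : Ω → Finset ι} {n : ℕ}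

theorem integral_comp (hS : IsSRSWOR μ S n) (hnN : n ≤ Fintype.card ι) (h : Finset ι → ℝ) :
    ∫ ω, h (S ω) ∂μ = (∑ t ∈ univ.powersetCard n, h t) / (Fintype.card ι).choose n := by
  have hcard : #(univ.powersetCard n : Finset (Finset ι)) = (Fintype.card ι).choose n := by
    rw [card_powersetCard, card_univ]
  rw [integral_comp_eq_sum_div_card hS.measurable (powersetCard_nonempty.2 (by simpa)) _ h, hcard]
  intro t ht
  rw [hcard, hS.measure_eq t (mem_powersetCard_univ.1 ht)]

variable [DecidableEq ι]

theorem integral_sum (hS : IsSRSWOR μ S n) (hn : 1 ≤ n) (hnN : n ≤ Fintype.card ι) (a : ι → ℝ) :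
    ∫ ω, ∑ j ∈ S ω, a j ∂μ = n / Fintype.card ι * ∑ j, a j := by
  rw [hS.integral_comp hnN (fun t => ∑ j ∈ t, a j), sum_powersetCard_sum_s15 hn, card_univ,
    nsmul_eq_mul, mul_div_right_comm, Nat.cast_choose_pred_div_choose hn hnN]

theorem integral_sum_mul_sum (hS : IsSRSWOR μ S n) (hn : 2 ≤ n) (hnN : n ≤ Fintype.card ι)
    (x y : ι → ℝ) :
    ∫ ω, (∑ j ∈ S ω, x j) * (∑ j ∈ S ω, y j) ∂μ =
      n / Fintype.card ι * ∑ j, x j * y j +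
        n * (n - 1) / (Fintype.card ι * (Fintype.card ι - 1)) *
          ((∑ j, x j) * (∑ j, y j) - ∑ j, x j * y j) := by
  rw [hS.integral_comp hnN (fun t => (∑ j ∈ t, x j) * (∑ j ∈ t, y j)),
    sum_powersetCard_sum_mul_sum hn, card_univ, nsmul_eq_mul, nsmul_eq_mul, add_div,
    mul_div_right_comm, mul_div_right_comm _ (_ - _),
    Nat.cast_choose_pred_div_choose (by omega) hnN, Nat.cast_choose_sub_two_div_choose hn hnN]

end IsSRSWOR

end SimpleRandomSampling

theorem plug_in_covariance_estimator_expectation_general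
    {Ω : Type*} [MeasurableSpace Ω] (μ : Measure Ω) [IsProbabilityMeasure μ]
    (N n : ℕ) (hn : 2 ≤ n) (hnN : n ≤ N)
    (x y : Fin N → ℝ)
    (S : Ω → Finset (Fin N)) (hSmeas : Measurable S)
    (hS : ∀ t : Finset (Fin N), t.card = n →
      μ {ω | S ω = t} = (N.choose n : ℝ≥0∞)⁻¹)
    (Tx Ty Txy : Ω → ℝ)
    (hTx : MemLp Tx 2 μ) (hTy : MemLp Ty 2 μ) (hTxy : MemLp Txy 2 μ)
    (hTxunb : μ[Tx | MeasurableSpace.comap S ⊤] =ᵐ[μ] fun ω => ∑ j ∈ S ω, x j)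
    (hTyunb : μ[Ty | MeasurableSpace.comap S ⊤] =ᵐ[μ] fun ω => ∑ j ∈ S ω, y j)
    (hTxyunb : μ[Txy | MeasurableSpace.comap S ⊤] =ᵐ[μ] fun ω => ∑ j ∈ S ω, x j * y j) :
    ∫ ω, (Txy ω - Tx ω * Ty ω / (n : ℝ)) / ((n : ℝ) - 1) ∂μ =
      (∑ j, (x j - (∑ i, x i) / (N : ℝ)) * (y j - (∑ i, y i) / (N : ℝ))) /
          ((N : ℝ) - 1) -
        (1 / ((n : ℝ) * ((n : ℝ) - 1))) *
          ∫ ω, condCovFn (MeasurableSpace.comap S ⊤) μ Tx Ty ω ∂μ := by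
  have hm : MeasurableSpace.comap S ⊤ ≤ ‹MeasurableSpace Ω› := hSmeas.comap_le
  have hsrs : IsSRSWOR μ S n := ⟨hSmeas, by simpa using hS⟩
  have hxy : ∫ ω, Txy ω ∂μ = ∫ ω, ∑ j ∈ S ω, x j * y j ∂μ :=
    (integral_condExp hm).symm.trans (integral_congr_ae hTxyunb)
  have hprod : ∫ ω, μ[Tx|MeasurableSpace.comap S ⊤] ω * μ[Ty|MeasurableSpace.comap S ⊤] ω ∂μ =
      ∫ ω, (∑ j ∈ S ω, x j) * (∑ j ∈ S ω, y j) ∂μ :=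
    integral_congr_ae (hTxunb.mul hTyunb)
  have hcov := integral_condCovFn hm hTx hTy
  rw [hprod, hsrs.integral_sum_mul_sum hn (by simpa), Fintype.card_fin] at hcov
  have hpop := sum_sub_mean_mul_sub_mean univ x y
  rw [card_univ, Fintype.card_fin] at hpop
  rw [integral_div, integral_sub, integral_div, hxy, hsrs.integral_sum (by omega) (by simpa),
    Fintype.card_fin, hpop, hcov]
  · have hN : (N : ℝ) ≠ 0 := by norm_cast; omega
    have hn1 : (n : ℝ) - 1 ≠ 0 := sub_ne_zero.2 (by norm_cast; omega)
    have hN1 : (N : ℝ) - 1 ≠ 0 := sub_ne_zero.2 (by norm_cast; omega)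
    field_simp
    ring
  · exact hTxy.integrable one_le_two
  · exact (hTx.integrable_mul hTy).div_const _

/-- **Bias of the plug-in covariance estimator.**
Let `S` be a SRSWOR of size `n` (`2 ≤ n ≤ N`) from a population of `N ≥ 2` units and
let `T_x, T_y, T_{xy}` be square-integrable with `E[T_x | S] = ∑_{j∈S} x_j`,
`E[T_y | S] = ∑_{j∈S} y_j`, `E[T_{xy} | S] = ∑_{j∈S} x_j y_j`.  Then
`Ŝ_{xy} = (1/(n−1)) (T_{xy} − T_x T_y/n)` satisfies
`E[Ŝ_{xy}] = S_{xy} − (1/(n(n−1))) E[Cov(T_x, T_y | S)]`. -/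
theorem plug_in_covariance_estimator_expectation
    {Ω : Type*} [MeasurableSpace Ω] (μ : Measure Ω) [IsProbabilityMeasure μ]
    (N n : ℕ) (hN : 2 ≤ N) (hn : 2 ≤ n) (hnN : n ≤ N)
    (x y : Fin N → ℝ)
    (S : Ω → Finset (Fin N)) (hSmeas : Measurable S)
    (hS : ∀ t : Finset (Fin N), t.card = n →
      μ {ω | S ω = t} = (N.choose n : ℝ≥0∞)⁻¹)
    (Tx Ty Txy : Ω → ℝ)
    (hTx : MemLp Tx 2 μ) (hTy : MemLp Ty 2 μ) (hTxy : MemLp Txy 2 μ)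
    (hTxunb : μ[Tx | MeasurableSpace.comap S ⊤] =ᵐ[μ] fun ω => ∑ j ∈ S ω, x j)
    (hTyunb : μ[Ty | MeasurableSpace.comap S ⊤] =ᵐ[μ] fun ω => ∑ j ∈ S ω, y j)
    (hTxyunb : μ[Txy | MeasurableSpace.comap S ⊤] =ᵐ[μ] fun ω => ∑ j ∈ S ω, x j * y j) :
    ∫ ω, (Txy ω - Tx ω * Ty ω / (n : ℝ)) / ((n : ℝ) - 1) ∂μ =
      (∑ j, (x j - (∑ i, x i) / (N : ℝ)) * (y j - (∑ i, y i) / (N : ℝ))) /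
          ((N : ℝ) - 1) -
        (1 / ((n : ℝ) * ((n : ℝ) - 1))) *
          ∫ ω, condCovFn (MeasurableSpace.comap S ⊤) μ Tx Ty ω ∂μ :=
  plug_in_covariance_estimator_expectation_general μ N n hn hnN x y S hSmeas hS Tx Ty Txy hTx hTy
    hTxy hTxunb hTyunb hTxyunb
end
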